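/- arXiv:1504.06132 — 2 statements merged into one kernel-verified Lean document; each statement's English description precedes it below -/
import Mathlib

section
/- (Landesman–Lazer implies (SC)) Let g : ℝ → ℝ be bounded continuous with finite limits g(±∞), Ω a bounded domain, f̄ ∈ L²(Ω), and φ₀ ∈ L²(Ω), φ₀ ≠ 0, satisfying the strict inequality ∫_Ω (g(+∞) − f̄)·φ₀⁺ dx − ∫_Ω (g(−∞) − f̄)·φ₀⁻ dx > 0. If (uₙ) ⊂ L²(Ω) satisfies ‖uₙ‖₂ → ∞ and uₙ/‖uₙ‖₂ → φ₀ in L²(Ω), then ∫_Ω G(uₙ) dx − ∫_Ω f̄·uₙ dx → +∞, where G(s) = ∫₀ˢ g. -/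
open Real Filter MeasureTheory intervalIntegral
open scoped ENNReal NNReal Topology

/-! Write `Nⱼ = ‖uⱼ‖₂`. The primitive `G` is Lipschitz and `G s / s → g(±∞)` as `s → ±∞`.
Replacing `uⱼ` by `Nⱼ φ₀` changes `∫ G(uⱼ) / Nⱼ` by at most a multiple of `‖uⱼ / Nⱼ - φ₀‖₁ → 0`,
and dominated convergence gives `∫ G(Nⱼ φ₀) / Nⱼ → ∫ g(+∞) φ₀⁺ - g(-∞) φ₀⁻`. Together with
`∫ f̄ uⱼ / Nⱼ → ∫ f̄ φ₀`, the functional divided by `Nⱼ` tends to the Landesman–Lazer quantity,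
which is positive, so the functional itself tends to `+∞`. -/

section Primitive

variable {g : ℝ → ℝ}

theorem lipschitzWith_intervalIntegral {M : ℝ≥0} (hg : Continuous g) (hM : ∀ s, |g s| ≤ M) :
    LipschitzWith M (fun s => ∫ τ in (0:ℝ)..s, g τ) := by
  refine LipschitzWith.of_dist_le_mul fun a b => ?_
  rw [dist_eq_norm, integral_interval_sub_left (hg.intervalIntegrable _ _)
    (hg.intervalIntegrable _ _), Real.dist_eq]
  exact norm_integral_le_of_norm_le_const fun x _ => hM x

theorem isLittleO_intervalIntegral_atTop (hg : Continuous g) (h0 : Tendsto g atTop (𝓝 0)) :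
    (fun s => ∫ τ in (0:ℝ)..s, g τ) =o[atTop] id := by
  refine Asymptotics.isLittleO_iff.2 fun ε hε => ?_
  obtain ⟨T, hT⟩ := eventually_atTop.1 (h0.eventually (Metric.closedBall_mem_nhds 0 (half_pos hε)))
  obtain ⟨C, hC⟩ : ∃ C, C = |∫ τ in (0:ℝ)..T, g τ| + ε / 2 * |T| := ⟨_, rfl⟩
  filter_upwards [eventually_ge_atTop T, eventually_ge_atTop (2 * C / ε)] with s hTs hCs
  have htail : |∫ τ in T..s, g τ| ≤ ε / 2 * |s - T| :=
    norm_integral_le_of_norm_le_const (f := g) fun x hx => by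
      have hTx : T < x := (Set.uIoc_of_le hTs ▸ hx).1
      simpa using hT x hTx.le
  rw [div_le_iff₀ hε] at hCs
  rw [← integral_add_adjacent_intervals (hg.intervalIntegrable 0 T) (hg.intervalIntegrable T s),
    id, Real.norm_eq_abs, Real.norm_eq_abs]
  nlinarith [abs_add_le (∫ τ in (0:ℝ)..T, g τ) (∫ τ in T..s, g τ), abs_sub s T, le_abs_self s]

theorem tendsto_intervalIntegral_div_atTop {c : ℝ} (hg : Continuous g)
    (hgc : Tendsto g atTop (𝓝 c)) :
    Tendsto (fun s => (∫ τ in (0:ℝ)..s, g τ) / s) atTop (𝓝 c) := by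
  have h := (isLittleO_intervalIntegral_atTop (g := fun τ => g τ - c) (hg.sub continuous_const)
    (tendsto_sub_nhds_zero_iff.2 hgc)).tendsto_div_nhds_zero.add_const c
  rw [zero_add] at h
  refine h.congr' ?_
  filter_upwards [eventually_ne_atTop 0] with s hs
  rw [integral_sub (hg.intervalIntegrable _ _) intervalIntegrable_const,
    intervalIntegral.integral_const, smul_eq_mul, sub_zero, id, sub_div,
    mul_div_cancel_left₀ _ hs, sub_add_cancel]

theorem tendsto_intervalIntegral_div_atBot {c : ℝ} (hg : Continuous g)
    (hgc : Tendsto g atBot (𝓝 c)) :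
    Tendsto (fun s => (∫ τ in (0:ℝ)..s, g τ) / s) atBot (𝓝 c) := by
  have h := (tendsto_intervalIntegral_div_atTop (hg.comp continuous_neg)
    (hgc.comp tendsto_neg_atTop_atBot)).comp tendsto_neg_atBot_atTop
  refine h.congr fun s => ?_
  simp [integral_comp_neg, integral_symm 0 s, neg_div_neg_eq]

end Primitive

section L2

variable {α : Type*} [MeasurableSpace α] {μ : Measure α} {ι : Type*} {l : Filter ι}

theorem MeasureTheory.MemLp.div_const {p : ℝ≥0∞} {f : α → ℝ} (hf : MemLp f p μ) (c : ℝ) :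
    MemLp (fun x => f x / c) p μ := by
  simpa only [div_eq_mul_inv] using hf.mul_const c⁻¹

theorem abs_integral_mul_le_eLpNorm_two {f g : α → ℝ} (hf : MemLp f 2 μ) (hg : MemLp g 2 μ) :
    |∫ x, f x * g x ∂μ| ≤ (eLpNorm f 2 μ).toReal * (eLpNorm g 2 μ).toReal := by
  have h : inner ℝ (hf.toLp f) (hg.toLp g) = ∫ x, f x * g x ∂μ := by
    rw [L2.inner_def]
    refine integral_congr_ae ?_
    filter_upwards [hf.coeFn_toLp, hg.coeFn_toLp] with x hfx hgx
    simp [hfx, hgx, mul_comm]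
  rw [← h, ← Lp.norm_toLp f hf, ← Lp.norm_toLp g hg]
  exact abs_real_inner_le_norm _ _

theorem tendsto_integral_mul_of_tendsto_eLpNorm {f φ : α → ℝ} {v : ι → α → ℝ}
    (hf : MemLp f 2 μ) (hv : ∀ i, MemLp (v i) 2 μ) (hφ : MemLp φ 2 μ)
    (h : Tendsto (fun i => (eLpNorm (fun x => v i x - φ x) 2 μ).toReal) l (𝓝 0)) :
    Tendsto (fun i => ∫ x, f x * v i x ∂μ) l (𝓝 (∫ x, f x * φ x ∂μ)) := by
  rw [tendsto_iff_norm_sub_tendsto_zero]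
  refine squeeze_zero_norm (fun i => ?_) (by simpa using h.const_mul (eLpNorm f 2 μ).toReal)
  have hfw {w : α → ℝ} (hw : MemLp w 2 μ) : Integrable (fun x => f x * w x) μ :=
    hf.integrable_mul hw
  rw [norm_norm, Real.norm_eq_abs, ← integral_sub (hfw (hv i)) (hfw hφ)]
  simp_rw [← mul_sub]
  exact abs_integral_mul_le_eLpNorm_two hf ((hv i).sub hφ)

theorem tendsto_integral_norm_sub_of_tendsto_eLpNorm [IsFiniteMeasure μ] {φ : α → ℝ}
    {v : ι → α → ℝ} (hv : ∀ i, MemLp (v i) 2 μ) (hφ : MemLp φ 2 μ)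
    (h : Tendsto (fun i => (eLpNorm (fun x => v i x - φ x) 2 μ).toReal) l (𝓝 0)) :
    Tendsto (fun i => ∫ x, ‖v i x - φ x‖ ∂μ) l (𝓝 0) := by
  refine squeeze_zero (fun i => integral_nonneg fun x => norm_nonneg _) (fun i => ?_)
    (by simpa using h.const_mul (eLpNorm (fun _ => (1 : ℝ)) 2 μ).toReal)
  have hcs := abs_integral_mul_le_eLpNorm_two (memLp_const (1 : ℝ)) ((hv i).sub hφ).norm
  simp only [one_mul, eLpNorm_norm] at hcs
  exact (le_abs_self _).trans hcs

theorem integral_posPart_negPart_sub_integral_mul [IsFiniteMeasure μ] {f φ : α → ℝ}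
    (hf : MemLp f 2 μ) (hφ : MemLp φ 2 μ) (a b : ℝ) :
    (∫ x, a * max (φ x) 0 - b * max (-φ x) 0 ∂μ) - ∫ x, f x * φ x ∂μ =
      (∫ x, (a - f x) * max (φ x) 0 ∂μ) - ∫ x, (b - f x) * max (-φ x) 0 ∂μ := by
  have hint {w : α → ℝ} (hw : MemLp w 2 μ) (c : ℝ) : Integrable (fun x => (c - f x) * w x) μ :=
    ((memLp_const c).sub hf).integrable_mul hw
  have hlim : Integrable (fun x => a * max (φ x) 0 - b * max (-φ x) 0) μ :=
    ((hφ.pos_part.integrable one_le_two).const_mul a).sub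
      ((hφ.neg_part.integrable one_le_two).const_mul b)
  have hfφ : Integrable (fun x => f x * φ x) μ := hf.integrable_mul hφ
  rw [← integral_sub (hint hφ.pos_part a) (hint hφ.neg_part b), ← integral_sub hlim hfφ]
  refine integral_congr_ae (Eventually.of_forall fun x => ?_)
  linear_combination f x * max_zero_sub_max_neg_zero_eq_self (φ x)

end L2

section Scaling

variable {ι : Type*} {l : Filter ι} {Φ : ℝ → ℝ} {a b : ℝ} {N : ι → ℝ}

theorem tendsto_comp_mul_div (h0 : Φ 0 = 0) (ha : Tendsto (fun s => Φ s / s) atTop (𝓝 a))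
    (hb : Tendsto (fun s => Φ s / s) atBot (𝓝 b)) (hN : Tendsto N l atTop) (x : ℝ) :
    Tendsto (fun i => Φ (N i * x) / N i) l (𝓝 (a * max x 0 - b * max (-x) 0)) := by
  have hscale {c : ℝ} {l' : Filter ℝ} (hc : Tendsto (fun s => Φ s / s) l' (𝓝 c))
      (hx : Tendsto (fun i => N i * x) l l') (hx0 : x ≠ 0) :
      Tendsto (fun i => Φ (N i * x) / N i) l (𝓝 (c * x)) := by
    refine ((hc.comp hx).mul_const x).congr' ?_
    filter_upwards [hN.eventually_ne_atTop 0] with i hi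
    simp only [Function.comp_apply]
    field_simp
  rcases lt_trichotomy x 0 with hx | rfl | hx
  · simpa [max_eq_right hx.le, max_eq_left (neg_nonneg.2 hx.le)]
      using hscale hb (hN.atTop_mul_const_of_neg hx) hx.ne
  · simpa [h0] using tendsto_const_nhds
  · simpa [max_eq_left hx.le, max_eq_right (neg_nonpos.2 hx.le)]
      using hscale ha (hN.atTop_mul_const hx) hx.ne'

variable {α : Type*} [MeasurableSpace α] {μ : Measure α} {K : ℝ≥0}

theorem tendsto_integral_comp_mul_div [l.IsCountablyGenerated] (hΦ : LipschitzWith K Φ)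
    (h0 : Φ 0 = 0) (ha : Tendsto (fun s => Φ s / s) atTop (𝓝 a))
    (hb : Tendsto (fun s => Φ s / s) atBot (𝓝 b)) (hN : Tendsto N l atTop) {φ : α → ℝ}
    (hφ : Integrable φ μ) :
    Tendsto (fun i => ∫ x, Φ (N i * φ x) / N i ∂μ) l
      (𝓝 (∫ x, a * max (φ x) 0 - b * max (-φ x) 0 ∂μ)) := by
  refine MeasureTheory.tendsto_integral_filter_of_dominated_convergence (fun x => K * ‖φ x‖)
    (Eventually.of_forall fun i =>
      ((hΦ.continuous.comp (continuous_const_mul (N i))).div_const (N i)).comp_aestronglyMeasurable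
        hφ.1)
    ?_ (hφ.norm.const_mul K)
    (Eventually.of_forall fun x => tendsto_comp_mul_div h0 ha hb hN (φ x))
  filter_upwards [hN.eventually_gt_atTop 0] with i hi
  refine Eventually.of_forall fun x => ?_
  rw [norm_div, Real.norm_of_nonneg hi.le, div_le_iff₀ hi]
  calc ‖Φ (N i * φ x)‖ ≤ K * ‖N i * φ x‖ := hΦ.norm_le_mul h0 _
    _ = K * ‖φ x‖ * N i := by rw [norm_mul, Real.norm_of_nonneg hi.le]; ring

theorem tendsto_integral_comp_div [IsFiniteMeasure μ] [l.IsCountablyGenerated]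
    (hΦ : LipschitzWith K Φ) (h0 : Φ 0 = 0) (ha : Tendsto (fun s => Φ s / s) atTop (𝓝 a))
    (hb : Tendsto (fun s => Φ s / s) atBot (𝓝 b)) (hN : Tendsto N l atTop)
    {u : ι → α → ℝ} {φ : α → ℝ} (hu : ∀ i, MemLp (u i) 2 μ) (hφ : MemLp φ 2 μ)
    (h : Tendsto (fun i => (eLpNorm (fun x => u i x / N i - φ x) 2 μ).toReal) l (𝓝 0)) :
    Tendsto (fun i => (∫ x, Φ (u i x) ∂μ) / N i) l
      (𝓝 (∫ x, a * max (φ x) 0 - b * max (-φ x) 0 ∂μ)) := by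
  have hΦint {w : α → ℝ} (hw : MemLp w 2 μ) : Integrable (fun x => Φ (w x)) μ :=
    (hΦ.comp_memLp h0 hw).integrable one_le_two
  have hv (i : ι) : MemLp (fun x => u i x / N i) 2 μ := (hu i).div_const (N i)
  have hL1 := tendsto_integral_norm_sub_of_tendsto_eLpNorm hv hφ h
  have herr : Tendsto (fun i => (∫ x, Φ (u i x) ∂μ) / N i - ∫ x, Φ (N i * φ x) / N i ∂μ) l
      (𝓝 0) := by
    refine squeeze_zero_norm' ?_ (by simpa using hL1.const_mul (K : ℝ))
    filter_upwards [hN.eventually_gt_atTop 0] with i hi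
    rw [← MeasureTheory.integral_div, ← integral_sub ((hΦint (hu i)).div_const _)
      ((hΦint (hφ.const_mul (N i))).div_const _), ← MeasureTheory.integral_const_mul]
    refine (MeasureTheory.norm_integral_le_integral_norm _).trans (integral_mono_of_nonneg
      (Eventually.of_forall fun x => norm_nonneg _)
      ((((hv i).sub hφ).integrable one_le_two).norm.const_mul _) (Eventually.of_forall fun x => ?_))
    calc ‖Φ (u i x) / N i - Φ (N i * φ x) / N i‖ = ‖Φ (u i x) - Φ (N i * φ x)‖ / N i := by
          rw [← sub_div, norm_div, Real.norm_of_nonneg hi.le]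
      _ ≤ K * ‖u i x - N i * φ x‖ / N i := by gcongr; exact hΦ.norm_sub_le _ _
      _ = K * ‖u i x / N i - φ x‖ := by
          have hdiv : (u i x - N i * φ x) / N i = u i x / N i - φ x := by field_simp
          rw [mul_div_assoc, ← hdiv, norm_div, Real.norm_of_nonneg hi.le]
  simpa using herr.add (tendsto_integral_comp_mul_div hΦ h0 ha hb hN (hφ.integrable one_le_two))

end Scaling

theorem stmt_11_general
    {n : ℕ} (Ω : Set (EuclideanSpace ℝ (Fin n)))
    (hΩb : Bornology.IsBounded Ω)
    (g : ℝ → ℝ) (hgc : Continuous g) (hgb : ∃ M : ℝ, ∀ s : ℝ, |g s| ≤ M)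
    (gp gm : ℝ) (hgp : Tendsto g atTop (nhds gp)) (hgm : Tendsto g atBot (nhds gm))
    (G : ℝ → ℝ) (hG : ∀ s : ℝ, G s = ∫ τ in (0 : ℝ)..s, g τ)
    (fbar : EuclideanSpace ℝ (Fin n) → ℝ) (hfbar : MemLp fbar 2 (volume.restrict Ω))
    (φ₀ : EuclideanSpace ℝ (Fin n) → ℝ) (hφ₀ : MemLp φ₀ 2 (volume.restrict Ω))
    (hLL : (∫ x, (gp - fbar x) * max (φ₀ x) 0 ∂(volume.restrict Ω)) -
      (∫ x, (gm - fbar x) * max (-(φ₀ x)) 0 ∂(volume.restrict Ω)) > 0)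
    (u : ℕ → EuclideanSpace ℝ (Fin n) → ℝ)
    (hu : ∀ j, MemLp (u j) 2 (volume.restrict Ω))
    (hnorm : Tendsto (fun j => (eLpNorm (u j) 2 (volume.restrict Ω)).toReal) atTop atTop)
    (hconv : Tendsto (fun j =>
        (eLpNorm (fun x => u j x / (eLpNorm (u j) 2 (volume.restrict Ω)).toReal - φ₀ x)
          2 (volume.restrict Ω)).toReal) atTop (nhds 0)) :
    Tendsto (fun j =>
        (∫ x, G (u j x) ∂(volume.restrict Ω)) -
          ∫ x, fbar x * u j x ∂(volume.restrict Ω)) atTop atTop := by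
  obtain ⟨M, hM⟩ := hgb
  obtain rfl : G = fun s => ∫ τ in (0 : ℝ)..s, g τ := funext hG
  have : IsFiniteMeasure (volume.restrict Ω) :=
    isFiniteMeasure_restrict.2 hΩb.measure_lt_top.ne
  have hG_lip := lipschitzWith_intervalIntegral hgc fun s => (hM s).trans (le_coe_toNNReal M)
  have hlim := (tendsto_integral_comp_div hG_lip (by simp)
    (tendsto_intervalIntegral_div_atTop hgc hgp) (tendsto_intervalIntegral_div_atBot hgc hgm)
    hnorm hu hφ₀ hconv).sub (tendsto_integral_mul_of_tendsto_eLpNorm hfbar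
      (fun j => (hu j).div_const _) hφ₀ hconv)
  rw [integral_posPart_negPart_sub_integral_mul hfbar hφ₀] at hlim
  refine (hnorm.atTop_mul_pos hLL hlim).congr' ?_
  filter_upwards [hnorm.eventually_gt_atTop 0] with j hj
  simp_rw [← mul_div_assoc, MeasureTheory.integral_div]
  rw [← sub_div, mul_div_cancel₀ _ hj.ne']

/-- Landesman–Lazer implies (SC)₊ along a sequence: if
`∫ (g(+∞) − f̄)·φ₀⁺ − ∫ (g(−∞) − f̄)·φ₀⁻ > 0`, `‖uₙ‖₂ → ∞` and
`uₙ/‖uₙ‖₂ → φ₀` in `L²(Ω)`, then `∫ G(uₙ) − ∫ f̄·uₙ → +∞`. -/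
theorem stmt_11
    {n : ℕ} (Ω : Set (EuclideanSpace ℝ (Fin n)))
    (hΩb : Bornology.IsBounded Ω) (hΩm : MeasurableSet Ω)
    (g : ℝ → ℝ) (hgc : Continuous g) (hgb : ∃ M : ℝ, ∀ s : ℝ, |g s| ≤ M)
    (gp gm : ℝ) (hgp : Tendsto g atTop (nhds gp)) (hgm : Tendsto g atBot (nhds gm))
    (G : ℝ → ℝ) (hG : ∀ s : ℝ, G s = ∫ τ in (0 : ℝ)..s, g τ)
    (fbar : EuclideanSpace ℝ (Fin n) → ℝ) (hfbar : MemLp fbar 2 (volume.restrict Ω))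
    (φ₀ : EuclideanSpace ℝ (Fin n) → ℝ) (hφ₀ : MemLp φ₀ 2 (volume.restrict Ω))
    (hφ₀ne : ¬ (φ₀ =ᵐ[volume.restrict Ω] 0))
    (hLL : (∫ x, (gp - fbar x) * max (φ₀ x) 0 ∂(volume.restrict Ω)) -
      (∫ x, (gm - fbar x) * max (-(φ₀ x)) 0 ∂(volume.restrict Ω)) > 0)
    (u : ℕ → EuclideanSpace ℝ (Fin n) → ℝ)
    (hu : ∀ j, MemLp (u j) 2 (volume.restrict Ω))
    (hnorm : Tendsto (fun j => (eLpNorm (u j) 2 (volume.restrict Ω)).toReal) atTop atTop)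
    (hconv : Tendsto (fun j =>
        (eLpNorm (fun x => u j x / (eLpNorm (u j) 2 (volume.restrict Ω)).toReal - φ₀ x)
          2 (volume.restrict Ω)).toReal) atTop (nhds 0)) :
    Tendsto (fun j =>
        (∫ x, G (u j x) ∂(volume.restrict Ω)) -
          ∫ x, fbar x * u j x ∂(volume.restrict Ω)) atTop atTop :=
  stmt_11_general Ω hΩb g hgc hgb gp gm hgp hgm G hG fbar hfbar φ₀ hφ₀ hLL u hu hnorm hconv
end

section
/- Let g(s) = arctan(s) + c·cos(s) with |c| arbitrary, G(s) = ∫₀ˢ g. Let Ω be a bounded domain, φ₀ ∈ L²(Ω) with ∫_Ω f̄·φ₀ dx < (π/2)∫_Ω |φ₀| dx for some f̄ ∈ L²(Ω), and φ₀ ≠ 0. If (uₙ) ⊂ L²(Ω) satisfies ‖uₙ‖₂ → ∞ and uₙ/‖uₙ‖₂ → φ₀ in L²(Ω), then (1/‖uₙ‖₂)(∫_Ω G(uₙ)dx − ∫_Ω f̄·uₙ dx) → (π/2)∫_Ω(φ₀⁺+φ₀⁻)dx − ∫_Ω f̄·φ₀ dx > 0, hence ∫_Ω G(uₙ)dx −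 ∫_Ω f̄·uₙ dx → +∞. -/
/-!
Since `s * arctan s = (π / 2) * |s| + O(1)`, `log (1 + s²) ≤ 4 √|s|` and `c * sin s` is bounded,
the primitive `G` equals `(π / 2) * |s|` up to an error of size `O(1 + √|s|)`. On a finite measure
space such an error integrates to `o(t)` along any sequence with `∫ |uⱼ| = O(t)`, `t → ∞`: bound
`b √|s| ≤ (b / 2) (w + |s| / w)` with `w = √t`. The remaining terms `∫ |uⱼ| / t` and
`∫ f̄ uⱼ / t` are integrals of `uⱼ / t` against fixed `L²` functions, so they converge under the
`L²` convergence `uⱼ / t → φ₀`.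
-/

open Real Filter MeasureTheory
open scoped Topology

theorem Real.log_one_add_pow_le {r : ℝ} (hr : 0 ≤ r) {n : ℕ} (hn : n ≠ 0) :
    log (1 + r ^ n) ≤ n * r :=
  calc log (1 + r ^ n) ≤ log ((1 + r) ^ n) :=
        log_le_log (by positivity) (by simpa using pow_add_pow_le zero_le_one hr hn)
    _ = n * log (1 + r) := by rw [log_pow]
    _ ≤ n * r := by
        gcongr
        linarith [log_le_sub_one_of_pos (show 0 < 1 + r by linarith)]

theorem Real.arctan_le_self {x : ℝ} (hx : 0 ≤ x) : arctan x ≤ x := by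
  simpa using le_tan (arctan_nonneg.2 hx) (arctan_lt_pi_div_two x)

theorem abs_pi_div_two_mul_abs_sub_mul_arctan_le_one (s : ℝ) :
    |π / 2 * |s| - s * arctan s| ≤ 1 := by
  wlog hs : 0 < s generalizing s
  · rcases (not_lt.1 hs).eq_or_lt with rfl | hs'
    · simp
    · simpa [arctan_neg, abs_of_neg hs', abs_of_pos (neg_pos.2 hs')] using this (-s) (by linarith)
  have hinv : s * arctan s⁻¹ ≤ 1 := by
    simpa [hs.ne'] using mul_le_mul_of_nonneg_left (arctan_le_self (inv_nonneg.2 hs.le)) hs.le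
  rw [arctan_inv_of_pos hs] at hinv
  rw [abs_of_pos hs, abs_le]
  constructor <;> nlinarith [arctan_lt_pi_div_two s]

theorem integral_arctan_add_mul_cos (c s : ℝ) :
    ∫ τ in (0 : ℝ)..s, (arctan τ + c * cos τ) =
      s * arctan s - log (1 + s ^ 2) / 2 + c * sin s := by
  have hderiv : ∀ τ : ℝ, HasDerivAt (fun y => y * arctan y - log (1 + y ^ 2) / 2 + c * sin y)
      (arctan τ + c * cos τ) τ := by
    intro τ
    have hq : HasDerivAt (fun y : ℝ => 1 + y ^ 2) (2 * τ) τ := by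
      simpa using (hasDerivAt_pow 2 τ).const_add 1
    refine ((((hasDerivAt_id' τ).mul (hasDerivAt_arctan τ)).sub
      ((hq.log (by positivity)).div_const 2)).add ((hasDerivAt_sin τ).const_mul c)).congr_deriv ?_
    field_simp
    ring
  rw [intervalIntegral.integral_eq_sub_of_hasDerivAt (fun τ _ => hderiv τ)
    ((continuous_arctan.add (continuous_const.mul continuous_cos)).intervalIntegrable 0 s)]
  simp

theorem abs_pi_div_two_mul_abs_sub_arctan_primitive_le (c s : ℝ) :
    |π / 2 * |s| - (s * arctan s - log (1 + s ^ 2) / 2 + c * sin s)| ≤ 1 + |c| + 2 * √|s| := by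
  have hpow : √|s| ^ 4 = s ^ 2 := by
    rw [show 4 = 2 * 2 by rfl, pow_mul, sq_sqrt (abs_nonneg s), sq_abs]
  have hlog : log (1 + s ^ 2) ≤ 4 * √|s| := by
    simpa [hpow] using log_one_add_pow_le (sqrt_nonneg |s|) (n := 4) (by norm_num)
  have hlog0 : 0 ≤ log (1 + s ^ 2) := log_nonneg (by nlinarith)
  have hsin : |c * sin s| ≤ |c| := by
    rw [abs_mul]; exact mul_le_of_le_one_right (abs_nonneg c) (abs_sin_le_one s)
  have harctan := abs_pi_div_two_mul_abs_sub_mul_arctan_le_one s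
  rw [abs_le] at *
  constructor <;> linarith

theorem mul_sqrt_le_half_mul_add {b x w : ℝ} (hb : 0 ≤ b) (hx : 0 ≤ x) (hw : 0 < w) :
    b * √x ≤ b / 2 * w + b / 2 / w * x := by
  have hsq : 0 ≤ b / 2 / w * (√x - w) ^ 2 := by positivity
  have hexp : b / 2 / w * (√x - w) ^ 2 = b / 2 * w + b / 2 / w * x - b * √x := by
    field_simp
    linear_combination b * sq_sqrt hx
  linarith

section Integrals

variable {α : Type*} [MeasurableSpace α] {μ : Measure α}

theorem tendsto_integral_mul_of_tendsto_eLpNorm_sub {h φ : α → ℝ} {v : ℕ → α → ℝ}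
    (hh : MemLp h 2 μ) (hφ : MemLp φ 2 μ) (hv : ∀ j, MemLp (v j) 2 μ)
    (hlim : Tendsto (fun j => eLpNorm (v j - φ) 2 μ) atTop (𝓝 0)) :
    Tendsto (fun j => ∫ x, h x * v j x ∂μ) atTop (𝓝 (∫ x, h x * φ x ∂μ)) := by
  refine tendsto_integral_of_L1' _ (hh.integrable_mul hφ).aestronglyMeasurable
    (Eventually.of_forall fun j => hh.integrable_mul (hv j)) ?_
  have hbound : ∀ j, eLpNorm ((fun x => h x * v j x) - fun x => h x * φ x) 1 μ ≤
      eLpNorm h 2 μ * eLpNorm (v j - φ) 2 μ := by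
    intro j
    have hsmul : ((fun x => h x * v j x) - fun x => h x * φ x) = h • (v j - φ) := by
      ext x; simp [mul_sub]
    rw [hsmul]
    exact eLpNorm_smul_le_mul_eLpNorm ((hv j).1.sub hφ.1) hh.1
  have hzero : Tendsto (fun j => eLpNorm h 2 μ * eLpNorm (v j - φ) 2 μ) atTop (𝓝 0) := by
    simpa using ENNReal.Tendsto.const_mul hlim (Or.inr hh.eLpNorm_ne_top)
  exact tendsto_of_tendsto_of_tendsto_of_le_of_le tendsto_const_nhds hzero
    (fun _ => zero_le) hbound

theorem tendsto_integral_abs_of_tendsto_eLpNorm_sub [IsFiniteMeasure μ] {φ : α → ℝ}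
    {v : ℕ → α → ℝ} (hφ : MemLp φ 2 μ) (hv : ∀ j, MemLp (v j) 2 μ)
    (hlim : Tendsto (fun j => eLpNorm (v j - φ) 2 μ) atTop (𝓝 0)) :
    Tendsto (fun j => ∫ x, |v j x| ∂μ) atTop (𝓝 (∫ x, |φ x| ∂μ)) := by
  have habs : Tendsto (fun j => eLpNorm (|v j| - |φ|) 2 μ) atTop (𝓝 0) :=
    tendsto_of_tendsto_of_tendsto_of_le_of_le tendsto_const_nhds hlim (fun _ => zero_le)
      fun j => eLpNorm_mono fun x => by simpa using abs_abs_sub_abs_le_abs_sub (v j x) (φ x)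
  simpa using tendsto_integral_mul_of_tendsto_eLpNorm_sub (memLp_const 1) hφ.abs
    (fun j => (hv j).abs) habs

theorem integrable_comp_of_abs_le_add_sqrt [IsFiniteMeasure μ] {E : ℝ → ℝ}
    (hE : Continuous E) {a b : ℝ} (hb : 0 ≤ b) (hEb : ∀ s, |E s| ≤ a + b * √|s|)
    {u : α → ℝ} (hu : Integrable u μ) : Integrable (fun x => E (u x)) μ :=
  ((integrable_const (a + b / 2)).add (hu.abs.const_mul (b / 2))).mono'
    (hE.comp_aestronglyMeasurable hu.1) (Eventually.of_forall fun x => by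
      have := mul_sqrt_le_half_mul_add hb (abs_nonneg (u x)) one_pos
      simp only [Pi.add_apply, Real.norm_eq_abs, div_one, mul_one] at this ⊢
      linarith [hEb (u x)])

theorem tendsto_integral_comp_div_of_abs_le_add_sqrt [IsFiniteMeasure μ] {E : ℝ → ℝ}
    (hE : Continuous E) {a b : ℝ} (hb : 0 ≤ b) (hEb : ∀ s, |E s| ≤ a + b * √|s|)
    {u : ℕ → α → ℝ} (hu : ∀ j, Integrable (u j) μ) {t : ℕ → ℝ} (ht : Tendsto t atTop atTop)
    {L : ℝ} (hL : Tendsto (fun j => (∫ x, |u j x| ∂μ) / t j) atTop (𝓝 L)) :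
    Tendsto (fun j => (∫ x, E (u j x) ∂μ) / t j) atTop (𝓝 0) := by
  set m := μ.real Set.univ with hm
  have hbound : ∀ j, 1 ≤ t j → |(∫ x, E (u j x) ∂μ) / t j| ≤
      a * m * (t j)⁻¹ + b / 2 * (m + (∫ x, |u j x| ∂μ) / t j) * (√(t j))⁻¹ := by
    intro j htj
    have ht0 : 0 < t j := one_pos.trans_le htj
    have hw : 0 < √(t j) := sqrt_pos.2 ht0
    calc |(∫ x, E (u j x) ∂μ) / t j|
        = |∫ x, E (u j x) ∂μ| / t j := by rw [abs_div, abs_of_pos ht0]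
      _ ≤ (∫ x, (a + b / 2 * √(t j) + b / 2 / √(t j) * |u j x|) ∂μ) / t j := by
          gcongr
          refine abs_integral_le_integral_abs.trans (integral_mono
            (integrable_comp_of_abs_le_add_sqrt hE hb hEb (hu j)).abs
            ((integrable_const _).add ((hu j).abs.const_mul _)) fun x => ?_)
          linarith [hEb (u j x), mul_sqrt_le_half_mul_add hb (abs_nonneg (u j x)) hw]
      _ = _ := by
          rw [integral_add (integrable_const _) ((hu j).abs.const_mul _), integral_const,
            integral_const_mul, smul_eq_mul, ← hm]
          field_simp
          linear_combination m * b * mul_self_sqrt ht0.le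
  have hlim : Tendsto (fun j => a * m * (t j)⁻¹ +
      b / 2 * (m + (∫ x, |u j x| ∂μ) / t j) * (√(t j))⁻¹) atTop (𝓝 0) := by
    have hinv := tendsto_inv_atTop_zero.comp ht
    have hinvsqrt := tendsto_inv_atTop_zero.comp (tendsto_sqrt_atTop.comp ht)
    simpa using (hinv.const_mul (a * m)).add (((hL.const_add m).const_mul (b / 2)).mul hinvsqrt)
  exact squeeze_zero_norm' ((ht.eventually_ge_atTop 1).mono hbound) hlim

theorem tendsto_integral_sub_integral_mul_div_of_tendsto_eLpNorm [IsFiniteMeasure μ]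
    {G : ℝ → ℝ} (hG : Continuous G) {k a b : ℝ} (hb : 0 ≤ b)
    (hGb : ∀ s, |k * |s| - G s| ≤ a + b * √|s|) {f φ : α → ℝ} (hf : MemLp f 2 μ)
    (hφ : MemLp φ 2 μ) {u : ℕ → α → ℝ} (hu : ∀ j, MemLp (u j) 2 μ) {t : ℕ → ℝ}
    (ht : Tendsto t atTop atTop)
    (hconv : Tendsto (fun j => (eLpNorm (fun x => u j x / t j - φ x) 2 μ).toReal) atTop
      (𝓝 0)) :
    Tendsto (fun j => ((∫ x, G (u j x) ∂μ) - ∫ x, f x * u j x ∂μ) / t j) atTop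
      (𝓝 (k * ∫ x, |φ x| ∂μ - ∫ x, f x * φ x ∂μ)) := by
  set v : ℕ → α → ℝ := fun j x => u j x / t j
  have hv : ∀ j, MemLp (v j) 2 μ := fun j => by
    simpa [v, div_eq_mul_inv, mul_comm] using (hu j).const_mul (t j)⁻¹
  have hlim : Tendsto (fun j => eLpNorm (v j - φ) 2 μ) atTop (𝓝 0) :=
    (ENNReal.tendsto_toReal_iff (fun j => ((hv j).sub hφ).eLpNorm_ne_top) ENNReal.zero_ne_top).1
      hconv
  have habs := tendsto_integral_abs_of_tendsto_eLpNorm_sub hφ hv hlim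
  have hIu : ∀ j, Integrable (u j) μ := fun j => (hu j).integrable one_le_two
  have hscale : ∀ᶠ j in atTop, ∫ x, |v j x| ∂μ = (∫ x, |u j x| ∂μ) / t j ∧
      ∫ x, f x * v j x ∂μ = (∫ x, f x * u j x ∂μ) / t j := by
    filter_upwards [ht.eventually_gt_atTop 0] with j htj
    simp only [v, abs_div, abs_of_pos htj, mul_div_assoc', integral_div, and_self]
  have hE := tendsto_integral_comp_div_of_abs_le_add_sqrt (E := fun s => k * |s| - G s)
    (by fun_prop) hb hGb hIu ht
    (habs.congr' (hscale.mono fun j h => h.1))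
  have hfv := tendsto_integral_mul_of_tendsto_eLpNorm_sub hf hφ hv hlim
  refine (sub_zero (k * ∫ x, |φ x| ∂μ) ▸ ((habs.const_mul k).sub hE).sub hfv).congr' ?_
  filter_upwards [hscale] with j ⟨habsj, hfj⟩
  have hIG : ∫ x, G (u j x) ∂μ =
      k * ∫ x, |u j x| ∂μ - ∫ x, (k * |u j x| - G (u j x)) ∂μ := by
    rw [← integral_const_mul, ← integral_sub
      ((hIu j).abs.const_mul k) (integrable_comp_of_abs_le_add_sqrt (by fun_prop) hb hGb (hIu j))]
    simp only [sub_sub_cancel]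
  rw [habsj, hfj, hIG]
  ring

end Integrals

theorem stmt_17_general
    {n : ℕ} (Ω : Set (EuclideanSpace ℝ (Fin n)))
    (hΩb : Bornology.IsBounded Ω)
    (c : ℝ) (g : ℝ → ℝ) (hg : ∀ s : ℝ, g s = Real.arctan s + c * Real.cos s)
    (G : ℝ → ℝ) (hG : ∀ s : ℝ, G s = ∫ τ in (0 : ℝ)..s, g τ)
    (fbar : EuclideanSpace ℝ (Fin n) → ℝ) (hfbar : MemLp fbar 2 (volume.restrict Ω))
    (φ₀ : EuclideanSpace ℝ (Fin n) → ℝ) (hφ₀ : MemLp φ₀ 2 (volume.restrict Ω))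
    (hstrip : (∫ x, fbar x * φ₀ x ∂(volume.restrict Ω)) <
      (π / 2) * ∫ x, |φ₀ x| ∂(volume.restrict Ω))
    (u : ℕ → EuclideanSpace ℝ (Fin n) → ℝ)
    (hu : ∀ j, MemLp (u j) 2 (volume.restrict Ω))
    (hnorm : Tendsto (fun j => (eLpNorm (u j) 2 (volume.restrict Ω)).toReal) atTop atTop)
    (hconv : Tendsto (fun j =>
        (eLpNorm (fun x => u j x / (eLpNorm (u j) 2 (volume.restrict Ω)).toReal - φ₀ x)
          2 (volume.restrict Ω)).toReal) atTop (nhds 0)) :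
    Tendsto (fun j =>
        ((∫ x, G (u j x) ∂(volume.restrict Ω)) -
          ∫ x, fbar x * u j x ∂(volume.restrict Ω)) /
          (eLpNorm (u j) 2 (volume.restrict Ω)).toReal)
      atTop
      (nhds ((π / 2) * (∫ x, (max (φ₀ x) 0 + max (-(φ₀ x)) 0) ∂(volume.restrict Ω)) -
        ∫ x, fbar x * φ₀ x ∂(volume.restrict Ω))) ∧
    (π / 2) * (∫ x, (max (φ₀ x) 0 + max (-(φ₀ x)) 0) ∂(volume.restrict Ω)) -
      (∫ x, fbar x * φ₀ x ∂(volume.restrict Ω)) > 0 ∧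
    Tendsto (fun j =>
        (∫ x, G (u j x) ∂(volume.restrict Ω)) -
          ∫ x, fbar x * u j x ∂(volume.restrict Ω)) atTop atTop := by
  have : IsFiniteMeasure (volume.restrict Ω) :=
    ⟨by rw [Measure.restrict_apply_univ]; exact hΩb.measure_lt_top⟩
  have hGeq : G = fun s => s * arctan s - log (1 + s ^ 2) / 2 + c * sin s := by
    funext s
    simp only [hG, hg, integral_arctan_add_mul_cos]
  have hGc : Continuous G := by
    have hlog : Continuous fun s : ℝ => log (1 + s ^ 2) :=
      (continuous_const.add (continuous_pow 2)).log fun s =>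
        (by positivity : (0 : ℝ) < 1 + s ^ 2).ne'
    rw [hGeq]
    exact ((continuous_id.mul continuous_arctan).sub (hlog.div_const 2)).add
      (continuous_const.mul continuous_sin)
  have hGb : ∀ s, |π / 2 * |s| - G s| ≤ 1 + |c| + 2 * √|s| := fun s => by
    rw [hGeq]
    exact abs_pi_div_two_mul_abs_sub_arctan_primitive_le c s
  have hlim := tendsto_integral_sub_integral_mul_div_of_tendsto_eLpNorm hGc zero_le_two hGb
    hfbar hφ₀ hu hnorm hconv
  have hpos := sub_pos.2 hstrip
  simp only [max_zero_add_max_neg_zero_eq_abs_self]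
  refine ⟨hlim, hpos, (hlim.pos_mul_atTop hpos hnorm).congr' ?_⟩
  filter_upwards [hnorm.eventually_gt_atTop 0] with j hj
  exact div_mul_cancel₀ _ hj.ne'

/-- Verification of (SC)₊ for `g(s) = arctan s + c·cos s`: if
`∫ f̄·φ₀ < (π/2)∫|φ₀|`, `φ₀ ≠ 0`, `‖uₙ‖₂ → ∞` and `uₙ/‖uₙ‖₂ → φ₀` in `L²(Ω)`, then
`(∫G(uₙ) − ∫f̄·uₙ)/‖uₙ‖₂ → (π/2)∫(φ₀⁺+φ₀⁻) − ∫f̄·φ₀ > 0`, hence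
`∫G(uₙ) − ∫f̄·uₙ → +∞`. -/
theorem stmt_17
    {n : ℕ} (Ω : Set (EuclideanSpace ℝ (Fin n)))
    (hΩb : Bornology.IsBounded Ω) (hΩm : MeasurableSet Ω)
    (c : ℝ) (g : ℝ → ℝ) (hg : ∀ s : ℝ, g s = Real.arctan s + c * Real.cos s)
    (G : ℝ → ℝ) (hG : ∀ s : ℝ, G s = ∫ τ in (0 : ℝ)..s, g τ)
    (fbar : EuclideanSpace ℝ (Fin n) → ℝ) (hfbar : MemLp fbar 2 (volume.restrict Ω))
    (φ₀ : EuclideanSpace ℝ (Fin n) → ℝ) (hφ₀ : MemLp φ₀ 2 (volume.restrict Ω))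
    (hφ₀ne : ¬ (φ₀ =ᵐ[volume.restrict Ω] 0))
    (hstrip : (∫ x, fbar x * φ₀ x ∂(volume.restrict Ω)) <
      (π / 2) * ∫ x, |φ₀ x| ∂(volume.restrict Ω))
    (u : ℕ → EuclideanSpace ℝ (Fin n) → ℝ)
    (hu : ∀ j, MemLp (u j) 2 (volume.restrict Ω))
    (hnorm : Tendsto (fun j => (eLpNorm (u j) 2 (volume.restrict Ω)).toReal) atTop atTop)
    (hconv : Tendsto (fun j =>
        (eLpNorm (fun x => u j x / (eLpNorm (u j) 2 (volume.restrict Ω)).toReal - φ₀ x)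
          2 (volume.restrict Ω)).toReal) atTop (nhds 0)) :
    Tendsto (fun j =>
        ((∫ x, G (u j x) ∂(volume.restrict Ω)) -
          ∫ x, fbar x * u j x ∂(volume.restrict Ω)) /
          (eLpNorm (u j) 2 (volume.restrict Ω)).toReal)
      atTop
      (nhds ((π / 2) * (∫ x, (max (φ₀ x) 0 + max (-(φ₀ x)) 0) ∂(volume.restrict Ω)) -
        ∫ x, fbar x * φ₀ x ∂(volume.restrict Ω))) ∧
    (π / 2) * (∫ x, (max (φ₀ x) 0 + max (-(φ₀ x)) 0) ∂(volume.restrict Ω)) -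
      (∫ x, fbar x * φ₀ x ∂(volume.restrict Ω)) > 0 ∧
    Tendsto (fun j =>
        (∫ x, G (u j x) ∂(volume.restrict Ω)) -
          ∫ x, fbar x * u j x ∂(volume.restrict Ω)) atTop atTop :=
  stmt_17_general Ω hΩb c g hg G hG fbar hfbar φ₀ hφ₀ hstrip u hu hnorm hconv
end
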